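/- arXiv:1302.6975 — 5 statements merged into one kernel-verified Lean document; each statement's English description precedes it below -/
import Mathlib

section
/- Let I and J be nonempty open intervals of ℝ, and let u : ℝ → ℝ and v : ℝ → ℝ be three times differentiable on I and on J respectively. Then the identity 2u(ξ) − (ξ − η)u'(ξ) = 2v(η) + (ξ − η)v'(η) holds for all ξ ∈ I and η ∈ J if and only if there exist real numbers r₀, r₁, r₂ such that u(ξ) = r₀ξ² + 2r₁ξ + r₂ for all ξ ∈ I and v(η) = r₀η² + 2r₁η + r₂ for all η ∈ J. -/
/-!
Treat `u'` and `v'` as arbitrary functions `p`, `q`. The mixed second difference of the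
identity in `(ξ, η)` says that every difference quotient of `p` on `I` equals every difference
quotient of `q` on `J`, so `p = Aξ + B` and `q = Aη + B'` share their slope `A`.
Substituting back separates the variables,
`2u(ξ) - Aξ² - (B + B')ξ = 2v(η) - Aη² - (B + B')η`, so both sides are one constant.
-/

open Set

section LeeIdentity

variable {S T : Set ℝ} {u v p q : ℝ → ℝ}

theorem lee_identity_mixed_difference
    (h : ∀ ξ ∈ S, ∀ η ∈ T, 2 * u ξ - (ξ - η) * p ξ = 2 * v η + (ξ - η) * q η)
    {ξ₁ ξ₂ η₁ η₂ : ℝ} (hξ₁ : ξ₁ ∈ S) (hξ₂ : ξ₂ ∈ S) (hη₁ : η₁ ∈ T) (hη₂ : η₂ ∈ T) :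
    (η₁ - η₂) * (p ξ₁ - p ξ₂) = (ξ₁ - ξ₂) * (q η₁ - q η₂) := by
  linear_combination h ξ₁ hξ₁ η₁ hη₁ - h ξ₁ hξ₁ η₂ hη₂ - h ξ₂ hξ₂ η₁ hη₁ + h ξ₂ hξ₂ η₂ hη₂

theorem exists_common_slope_of_lee_identity (hS : S.Nontrivial) (hT : T.Nontrivial)
    (h : ∀ ξ ∈ S, ∀ η ∈ T, 2 * u ξ - (ξ - η) * p ξ = 2 * v η + (ξ - η) * q η) :
    ∃ A : ℝ, (∀ ξ ∈ S, ∀ ξ' ∈ S, p ξ - p ξ' = A * (ξ - ξ')) ∧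
      (∀ η ∈ T, ∀ η' ∈ T, q η - q η' = A * (η - η')) := by
  obtain ⟨ξ₁, hξ₁, ξ₂, hξ₂, hξ₁₂⟩ := hS
  obtain ⟨η₁, hη₁, η₂, hη₂, hη₁₂⟩ := hT
  have hξ : ξ₁ - ξ₂ ≠ 0 := sub_ne_zero.mpr hξ₁₂
  have hη : η₁ - η₂ ≠ 0 := sub_ne_zero.mpr hη₁₂
  set A := (q η₁ - q η₂) / (η₁ - η₂) with hA
  have hp : ∀ ξ ∈ S, ∀ ξ' ∈ S, p ξ - p ξ' = A * (ξ - ξ') := fun ξ hξ ξ' hξ' ↦ by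
    refine mul_left_cancel₀ hη ?_
    rw [lee_identity_mixed_difference h hξ hξ' hη₁ hη₂, hA]
    field_simp
  refine ⟨A, hp, fun η hηT η' hη'T ↦ mul_left_cancel₀ hξ ?_⟩
  rw [← lee_identity_mixed_difference h hξ₁ hξ₂ hηT hη'T, hp ξ₁ hξ₁ ξ₂ hξ₂]
  ring

theorem exists_quadratic_of_lee_identity (hS : S.Nontrivial) (hT : T.Nontrivial)
    (h : ∀ ξ ∈ S, ∀ η ∈ T, 2 * u ξ - (ξ - η) * p ξ = 2 * v η + (ξ - η) * q η) :
    ∃ r0 r1 r2 : ℝ,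
      (∀ ξ ∈ S, u ξ = r0 * ξ ^ 2 + 2 * r1 * ξ + r2) ∧
      (∀ η ∈ T, v η = r0 * η ^ 2 + 2 * r1 * η + r2) := by
  obtain ⟨A, hp, hq⟩ := exists_common_slope_of_lee_identity hS hT h
  obtain ⟨ξ₀, hξ₀⟩ := hS.nonempty
  obtain ⟨η₀, hη₀⟩ := hT.nonempty
  set r1 := (p ξ₀ - A * ξ₀ + q η₀ - A * η₀) / 4
  refine ⟨A / 2, r1, v η₀ - A / 2 * η₀ ^ 2 - 2 * r1 * η₀, fun ξ hξ ↦ ?_, fun η hη ↦ ?_⟩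
  · linear_combination h ξ hξ η₀ hη₀ / 2 + (ξ - η₀) / 2 * hp ξ hξ ξ₀ hξ₀
  · linear_combination (h ξ₀ hξ₀ η₀ hη₀ - h ξ₀ hξ₀ η hη) / 2 + (η - ξ₀) / 2 * hq η hη η₀ hη₀

end LeeIdentity

theorem deriv_eq_of_eqOn_quadratic {s : Set ℝ} (hs : IsOpen s) {u : ℝ → ℝ} {r0 r1 r2 : ℝ}
    (hu : ∀ y ∈ s, u y = r0 * y ^ 2 + 2 * r1 * y + r2) {x : ℝ} (hx : x ∈ s) :
    deriv u x = 2 * r0 * x + 2 * r1 := by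
  have hquad : HasDerivAt (fun y ↦ r0 * y ^ 2 + 2 * r1 * y + r2)
      (r0 * (2 * x ^ 1) + 2 * r1 * 1) x :=
    (((hasDerivAt_pow 2 x).const_mul r0).add ((hasDerivAt_id x).const_mul (2 * r1))).add_const r2
  rw [(EqOn.eventuallyEq_of_mem hu (hs.mem_nhds hx)).deriv_eq, hquad.deriv]
  ring

theorem lee_form_functional_equation_general
    (a b c d : ℝ) (hab : a < b) (hcd : c < d) (u v : ℝ → ℝ) :
    (∀ ξ ∈ Set.Ioo a b, ∀ η ∈ Set.Ioo c d,
        2 * u ξ - (ξ - η) * deriv u ξ = 2 * v η + (ξ - η) * deriv v η)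
    ↔ ∃ r0 r1 r2 : ℝ,
        (∀ ξ ∈ Set.Ioo a b, u ξ = r0 * ξ ^ 2 + 2 * r1 * ξ + r2) ∧
        (∀ η ∈ Set.Ioo c d, v η = r0 * η ^ 2 + 2 * r1 * η + r2) := by
  refine ⟨exists_quadratic_of_lee_identity (Ioo_infinite hab).nontrivial
    (Ioo_infinite hcd).nontrivial, ?_⟩
  rintro ⟨r0, r1, r2, hu, hv⟩ ξ hξ η hη
  rw [deriv_eq_of_eqOn_quadratic isOpen_Ioo hu hξ, deriv_eq_of_eqOn_quadratic isOpen_Ioo hv hη,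
    hu ξ hξ, hv η hη]
  ring

/-- On nonempty open intervals `I = (a,b)` and `J = (c,d)`, for `u`, `v` three times
differentiable on `I`, `J` respectively, the identity
`2u(ξ) − (ξ−η)u'(ξ) = 2v(η) + (ξ−η)v'(η)` holds for all `ξ ∈ I`, `η ∈ J`
iff `u` and `v` are both restrictions of a single quadratic `r₀z² + 2r₁z + r₂`. -/
theorem lee_form_functional_equation
    (a b c d : ℝ) (hab : a < b) (hcd : c < d) (u v : ℝ → ℝ)
    (hu : ∀ x ∈ Set.Ioo a b, DifferentiableAt ℝ u x ∧
        DifferentiableAt ℝ (deriv u) x ∧ DifferentiableAt ℝ (deriv (deriv u)) x)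
    (hv : ∀ y ∈ Set.Ioo c d, DifferentiableAt ℝ v y ∧
        DifferentiableAt ℝ (deriv v) y ∧ DifferentiableAt ℝ (deriv (deriv v)) y) :
    (∀ ξ ∈ Set.Ioo a b, ∀ η ∈ Set.Ioo c d,
        2 * u ξ - (ξ - η) * deriv u ξ = 2 * v η + (ξ - η) * deriv v η)
    ↔ ∃ r0 r1 r2 : ℝ,
        (∀ ξ ∈ Set.Ioo a b, u ξ = r0 * ξ ^ 2 + 2 * r1 * ξ + r2) ∧
        (∀ η ∈ Set.Ioo c d, v η = r0 * η ^ 2 + 2 * r1 * η + r2) :=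
  lee_form_functional_equation_general a b c d hab hcd u v
end

section
/- Let p(x) = p₀x² + 2p₁x + p₂ be a real quadratic with p₁² = p₀p₂ (i.e. Q(p) = 0). Let U ⊆ ℝ be an open set on which p is nonvanishing and let A : ℝ → ℝ be twice differentiable on U. Then for every x ∈ U, p(x)² · d/dx[ p(x) · d/dx( A(x)/p(x)² ) ] = p(x)A''(x) − 3p'(x)A'(x) + 12p₀A(x). -/
/-!
For any nonvanishing `P`, applying the quotient rule twice gives
`P³ · (P · (A / P²)')' = P² A'' − 3 P P' A' + (4 P'² − 2 P P'') A`.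
For a quadratic `P`, `P'² − 2 P P'' = 4 Q(p)`; so when `Q(p) = 0` the last coefficient is
`6 P P'' = 12 p₀ P`, and dividing by `P` gives the identity.
-/

open Filter Topology

theorem HasDerivAt.div_sq {f g : ℝ → ℝ} {f' g' x : ℝ} (hf : HasDerivAt f f' x)
    (hg : HasDerivAt g g' x) (hx : g x ≠ 0) :
    HasDerivAt (fun s => f s / g s ^ 2) ((f' * g x - 2 * f x * g') / g x ^ 3) x :=
  (hf.div (hg.pow 2) (pow_ne_zero 2 hx)).congr_deriv <| by
    simp only [Pi.pow_apply]
    field_simp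
    ring

theorem pow_three_mul_deriv_mul_deriv_div_sq {A P : ℝ → ℝ} {x : ℝ}
    (hA : ∀ᶠ t in 𝓝 x, DifferentiableAt ℝ A t) (hP : ∀ᶠ t in 𝓝 x, DifferentiableAt ℝ P t)
    (hA' : DifferentiableAt ℝ (deriv A) x) (hP' : DifferentiableAt ℝ (deriv P) x)
    (hPx : P x ≠ 0) :
    P x ^ 3 * deriv (fun t => P t * deriv (fun s => A s / P s ^ 2) t) x =
      P x ^ 2 * deriv (deriv A) x - 3 * P x * deriv P x * deriv A x
        + (4 * deriv P x ^ 2 - 2 * P x * deriv (deriv P) x) * A x := by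
  have hP0 : ∀ᶠ t in 𝓝 x, P t ≠ 0 := hP.self_of_nhds.continuousAt.eventually_ne hPx
  have hinner : (fun t => P t * deriv (fun s => A s / P s ^ 2) t)
      =ᶠ[𝓝 x] fun t => (deriv A t * P t - 2 * A t * deriv P t) / P t ^ 2 := by
    filter_upwards [hA, hP, hP0] with t hAt hPt hPt0
    rw [(hAt.hasDerivAt.div_sq hPt.hasDerivAt hPt0).deriv]
    field_simp
  have hnum : HasDerivAt (fun t => deriv A t * P t - 2 * A t * deriv P t)
      (deriv (deriv A) x * P x + deriv A x * deriv P x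
        - (2 * deriv A x * deriv P x + 2 * A x * deriv (deriv P) x)) x :=
    (hA'.hasDerivAt.mul hP.self_of_nhds.hasDerivAt).sub
      ((hA.self_of_nhds.hasDerivAt.const_mul 2).mul hP'.hasDerivAt)
  rw [hinner.deriv_eq, (hnum.div_sq hP.self_of_nhds.hasDerivAt hPx).deriv]
  field_simp
  ring

theorem hasDerivAt_quadratic (p0 p1 p2 t : ℝ) :
    HasDerivAt (fun s => p0 * s ^ 2 + 2 * p1 * s + p2) (2 * p0 * t + 2 * p1) t := by
  have h := (((hasDerivAt_pow 2 t).const_mul p0).add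
    ((hasDerivAt_id t).const_mul (2 * p1))).add_const p2
  exact h.congr_deriv (by simp; ring)

theorem deriv_quadratic (p0 p1 p2 : ℝ) :
    deriv (fun s => p0 * s ^ 2 + 2 * p1 * s + p2) = fun t => 2 * p0 * t + 2 * p1 :=
  funext fun t => (hasDerivAt_quadratic p0 p1 p2 t).deriv

/-- For a null real quadratic `p` (i.e. `p₁² = p₀p₂`), nonvanishing on an open set `U`,
and `A` twice differentiable on `U`, for every `x ∈ U`:
`p(x)² · d/dx[p(x) · d/dx(A(x)/p(x)²)] = p(x)A''(x) − 3p'(x)A'(x) + 12p₀A(x)`. -/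
theorem null_quadratic_transvectant_identity
    (p0 p1 p2 : ℝ) (hp : p1 ^ 2 = p0 * p2)
    (U : Set ℝ) (hU : IsOpen U)
    (hpU : ∀ x ∈ U, p0 * x ^ 2 + 2 * p1 * x + p2 ≠ 0)
    (A : ℝ → ℝ)
    (hA : ∀ x ∈ U, DifferentiableAt ℝ A x ∧ DifferentiableAt ℝ (deriv A) x) :
    ∀ x ∈ U,
      (p0 * x ^ 2 + 2 * p1 * x + p2) ^ 2 *
        deriv (fun t => (p0 * t ^ 2 + 2 * p1 * t + p2) *
          deriv (fun s => A s / (p0 * s ^ 2 + 2 * p1 * s + p2) ^ 2) t) x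
      = (p0 * x ^ 2 + 2 * p1 * x + p2) * deriv (deriv A) x
          - 3 * (2 * p0 * x + 2 * p1) * deriv A x + 12 * p0 * A x := by
  intro x hx
  have hUx : ∀ᶠ t in 𝓝 x, t ∈ U := hU.mem_nhds hx
  have hsecond : deriv (fun t => 2 * p0 * t + 2 * p1) x = 2 * p0 := by simp
  have key := pow_three_mul_deriv_mul_deriv_div_sq (hUx.mono fun t ht => (hA t ht).1)
    (Eventually.of_forall fun t => (hasDerivAt_quadratic p0 p1 p2 t).differentiableAt)
    (hA x hx).2 (by rw [deriv_quadratic]; fun_prop) (hpU x hx)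
  rw [deriv_quadratic, hsecond] at key
  refine mul_left_cancel₀ (hpU x hx) ?_
  linear_combination key + 16 * A x * hp
end

section
/- Let q(z) = q₀z² + 2q₁z + q₂ be a nonzero real quadratic with polarization q(x,y) = q₀xy + q₁(x+y) + q₂, and let A, B : ℝ → ℝ be infinitely differentiable. Then the following are equivalent: (i) there exist real numbers w₀, w₁, w₂ such that for all real x, y: q(x,y)²A''(x) − 6(q₀y + q₁)q(x,y)A'(x) + 12(q₀y + q₁)²A(x) + q(x,y)²B''(y) − 6(q₀x + q₁)q(x,y)B'(y) + 12(q₀x + q₁)²B(y) = (x − y)(w₀xy + w₁(x+y) + w₂); (ii) there exist a real quadratic π with ⟨π,q⟩ = 0 and a real polynomial P of degree at most 4 such that A(z) = q(z)π(z) + P(z) and B(z) = q(z)π(z) − P(z) for all z. Moreover, when these hold, the triple (w₀,w₁,w₂) is unique and the quadratic w(z) = w₀z² + 2w₁z + w₂ equals q(z)²P'''(z) − 3q(z)q'(z)P''(z) + 3(q'(z)² + q(z)q''(z))P'(z) − 6q'(z)q''(z)P(z), which satisfies ⟨w,q⟩ = 0. -/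
/-- The quadratic `E(P)(z) = q(z)²P'''(z) − 3q(z)q'(z)P''(z) + 3(q'(z)² + q(z)q''(z))P'(z)
− 6q'(z)q''(z)P(z)` for the quartic `P(z) = c₀z⁴ + c₁z³ + c₂z² + c₃z + c₄` and the
quadratic `q(z) = q₀z² + 2q₁z + q₂`. -/
noncomputable def extremalQuadPlus (q0 q1 q2 c0 c1 c2 c3 c4 z : ℝ) : ℝ :=
  (q0 * z ^ 2 + 2 * q1 * z + q2) ^ 2 * (24 * c0 * z + 6 * c1)
    - 3 * (q0 * z ^ 2 + 2 * q1 * z + q2) * (2 * q0 * z + 2 * q1) *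
        (12 * c0 * z ^ 2 + 6 * c1 * z + 2 * c2)
    + 3 * ((2 * q0 * z + 2 * q1) ^ 2 + (q0 * z ^ 2 + 2 * q1 * z + q2) * (2 * q0)) *
        (4 * c0 * z ^ 3 + 3 * c1 * z ^ 2 + 2 * c2 * z + c3)
    - 6 * (2 * q0 * z + 2 * q1) * (2 * q0) *
        (c0 * z ^ 4 + c1 * z ^ 3 + c2 * z ^ 2 + c3 * z + c4)

/-- The left-hand side of the extremality equation for `g₊`:
`(q(x,y)², A(x))⁽²⁾ + (q(x,y)², B(y))⁽²⁾` written out explicitly. -/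
noncomputable def extremalLHSPlus (q0 q1 q2 : ℝ) (A B : ℝ → ℝ) (x y : ℝ) : ℝ :=
  (q0 * x * y + q1 * (x + y) + q2) ^ 2 * deriv (deriv A) x
    - 6 * (q0 * y + q1) * (q0 * x * y + q1 * (x + y) + q2) * deriv A x
    + 12 * (q0 * y + q1) ^ 2 * A x
    + (q0 * x * y + q1 * (x + y) + q2) ^ 2 * deriv (deriv B) y
    - 6 * (q0 * x + q1) * (q0 * x * y + q1 * (x + y) + q2) * deriv B y
    + 12 * (q0 * x + q1) ^ 2 * B y

section AmbitoricAux

private lemma cd_step {f : ℝ → ℝ} (h : ContDiff ℝ (⊤ : ℕ∞) f) :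
    ContDiff ℝ (⊤ : ℕ∞) (deriv f) := (contDiff_infty_iff_deriv.mp h).2

private lemma cd_diff {f : ℝ → ℝ} (h : ContDiff ℝ (⊤ : ℕ∞) f) : Differentiable ℝ f :=
  (contDiff_infty_iff_deriv.mp h).1

private lemma zero_of {f g : ℝ → ℝ} (h0 : ∀ t, f t = 0)
    (hd : ∀ t, HasDerivAt f (g t) t) : ∀ t, g t = 0 := by
  intro t
  have hf : f = fun _ => (0 : ℝ) := funext h0
  rw [hf] at hd
  simpa using (hd t).unique (hasDerivAt_const t 0)

private lemma hda_shape (a b c e P2 P1 P0 : ℝ) (p q r p' q' r' : ℝ → ℝ)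
    (hp : ∀ t, HasDerivAt p (p' t) t) (hq : ∀ t, HasDerivAt q (q' t) t)
    (hr : ∀ t, HasDerivAt r (r' t) t) (y : ℝ) :
    HasDerivAt
      (fun t => (a*t+b)^2 * p t + c*((a*t+b) * q t) + e * r t + (P2*t^2 + P1*t + P0))
      ((a*y+b)^2 * p' y + 2*a*(a*y+b)*p y + c*((a*y+b)*q' y + a*q y) + e*r' y
        + (2*P2*y + P1)) y := by
  have hu : HasDerivAt (fun t : ℝ => a*t+b) a y := by
    simpa using ((hasDerivAt_id' y).const_mul a).add_const b
  have h1 := (hu.pow 2).mul (hp y)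
  have h2 := (hu.mul (hq y)).const_mul c
  have h3 := (hr y).const_mul e
  have h4 := (((hasDerivAt_pow 2 y).const_mul P2).add
    ((hasDerivAt_id' y).const_mul P1)).add_const P0
  have H := ((h1.add h2).add h3).add h4
  refine H.congr_deriv ?_
  simp only [Pi.pow_apply]
  push_cast
  ring

private lemma quintic_kill (B : ℝ → ℝ) (hB : ContDiff ℝ (⊤ : ℕ∞) B) (a b P2 P1 P0 : ℝ)
    (h : ∀ y, (a*y+b)^2 * deriv (deriv B) y + (-6*a)*((a*y+b) * deriv B y)
      + (12*a^2) * B y + (P2*y^2 + P1*y + P0) = 0) :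
    ∀ y, (a*y+b)^2 * deriv (deriv (deriv (deriv (deriv B)))) y = 0 := by
  have h0 : ContDiff ℝ (⊤ : ℕ∞) B := hB.of_le (by simp)
  have h1 := cd_step h0
  have h2 := cd_step h1
  have h3 := cd_step h2
  have h4 := cd_step h3
  have d0 : ∀ t, HasDerivAt B (deriv B t) t := fun t =>
    ((cd_diff h0) t).hasDerivAt
  have d1 : ∀ t, HasDerivAt (deriv B) (deriv (deriv B) t) t := fun t =>
    ((cd_diff h1) t).hasDerivAt
  have d2 : ∀ t, HasDerivAt (deriv (deriv B)) (deriv (deriv (deriv B)) t) t := fun t =>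
    ((cd_diff h2) t).hasDerivAt
  have d3 : ∀ t, HasDerivAt (deriv (deriv (deriv B)))
      (deriv (deriv (deriv (deriv B))) t) t := fun t =>
    ((cd_diff h3) t).hasDerivAt
  have d4 : ∀ t, HasDerivAt (deriv (deriv (deriv (deriv B))))
      (deriv (deriv (deriv (deriv (deriv B)))) t) t := fun t =>
    ((cd_diff h4) t).hasDerivAt
  have z1 : ∀ t, (a*t+b)^2 * deriv (deriv (deriv B)) t + 2*a*(a*t+b)*deriv (deriv B) t
      + (-6*a)*((a*t+b)*deriv (deriv B) t + a*deriv B t) + (12*a^2)*deriv B t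
      + (2*P2*t + P1) = 0 :=
    zero_of h (fun t => hda_shape a b (-6*a) (12*a^2) P2 P1 P0 _ _ _ _ _ _ d2 d1 d0 t)
  have z1' : ∀ t, (a*t+b)^2 * deriv (deriv (deriv B)) t
      + (-4*a)*((a*t+b) * deriv (deriv B) t) + (6*a^2) * deriv B t
      + ((0:ℝ)*t^2 + (2*P2)*t + P1) = 0 := fun t => by linear_combination z1 t
  have z2 : ∀ t, (a*t+b)^2 * deriv (deriv (deriv (deriv B))) t
      + 2*a*(a*t+b)*deriv (deriv (deriv B)) t
      + (-4*a)*((a*t+b)*deriv (deriv (deriv B)) t + a*deriv (deriv B) t)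
      + (6*a^2)*deriv (deriv B) t + (2*0*t + 2*P2) = 0 :=
    zero_of z1' (fun t => hda_shape a b (-4*a) (6*a^2) 0 (2*P2) P1 _ _ _ _ _ _ d3 d2 d1 t)
  have z2' : ∀ t, (a*t+b)^2 * deriv (deriv (deriv (deriv B))) t
      + (-2*a)*((a*t+b) * deriv (deriv (deriv B)) t) + (2*a^2) * deriv (deriv B) t
      + ((0:ℝ)*t^2 + (0:ℝ)*t + 2*P2) = 0 := fun t => by linear_combination z2 t
  have z3 : ∀ t, (a*t+b)^2 * deriv (deriv (deriv (deriv (deriv B)))) t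
      + 2*a*(a*t+b)*deriv (deriv (deriv (deriv B))) t
      + (-2*a)*((a*t+b)*deriv (deriv (deriv (deriv B))) t + a*deriv (deriv (deriv B)) t)
      + (2*a^2)*deriv (deriv (deriv B)) t + (2*0*t + 0) = 0 :=
    zero_of z2' (fun t => hda_shape a b (-2*a) (2*a^2) 0 0 (2*P2) _ _ _ _ _ _ d4 d3 d2 t)
  intro y
  linear_combination z3 y

private lemma int_step (f : ℝ → ℝ) (hf : Differentiable ℝ f) (d0 d1 d2 d3 : ℝ)
    (h : ∀ t, deriv f t = 4*d0*t^3 + 3*d1*t^2 + 2*d2*t + d3) :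
    ∀ t, f t = d0*t^4 + d1*t^3 + d2*t^2 + d3*t + f 0 := by
  have hp : ∀ t : ℝ, HasDerivAt (fun s : ℝ => d0*s^4 + d1*s^3 + d2*s^2 + d3*s)
      (4*d0*t^3 + 3*d1*t^2 + 2*d2*t + d3) t := by
    intro t
    have H := ((((hasDerivAt_pow 4 t).const_mul d0).add
      ((hasDerivAt_pow 3 t).const_mul d1)).add
      ((hasDerivAt_pow 2 t).const_mul d2)).add ((hasDerivAt_id' t).const_mul d3)
    refine H.congr_deriv ?_
    push_cast
    ring
  have key : ∀ t, deriv (fun s => f s - (d0*s^4 + d1*s^3 + d2*s^2 + d3*s)) t = 0 := by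
    intro t
    rw [deriv_fun_sub (hf t) (hp t).differentiableAt, h t, (hp t).deriv]
    ring
  have hconst := is_const_of_deriv_eq_zero
    (hf.sub (fun t => (hp t).differentiableAt)) key
  intro t
  have h0 := hconst t 0
  simp only [Pi.sub_apply] at h0
  linear_combination h0

private lemma deriv_quartic (c0 c1 c2 c3 c4 : ℝ) :
    deriv (fun z : ℝ => c0*z^4 + c1*z^3 + c2*z^2 + c3*z + c4)
      = fun z => 4*c0*z^3 + 3*c1*z^2 + 2*c2*z + c3 := by
  funext z
  have H : HasDerivAt (fun z : ℝ => c0*z^4 + c1*z^3 + c2*z^2 + c3*z + c4)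
      (4*c0*z^3 + 3*c1*z^2 + 2*c2*z + c3) z := by
    have H := (((((hasDerivAt_pow 4 z).const_mul c0).add
      ((hasDerivAt_pow 3 z).const_mul c1)).add
      ((hasDerivAt_pow 2 z).const_mul c2)).add
      ((hasDerivAt_id' z).const_mul c3)).add_const c4
    refine H.congr_deriv ?_
    push_cast
    ring
  exact H.deriv

private lemma deriv_cubic (d0 d1 d2 d3 : ℝ) :
    deriv (fun z : ℝ => d0*z^3 + d1*z^2 + d2*z + d3)
      = fun z => 3*d0*z^2 + 2*d1*z + d2 := by
  funext z
  have H : HasDerivAt (fun z : ℝ => d0*z^3 + d1*z^2 + d2*z + d3)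
      (3*d0*z^2 + 2*d1*z + d2) z := by
    have H := ((((hasDerivAt_pow 3 z).const_mul d0).add
      ((hasDerivAt_pow 2 z).const_mul d1)).add
      ((hasDerivAt_id' z).const_mul d2)).add_const d3
    refine H.congr_deriv ?_
    push_cast
    ring
  exact H.deriv

private lemma quartic_of_ext (q0 q1 q2 : ℝ) (hq : ¬(q0 = 0 ∧ q1 = 0 ∧ q2 = 0))
    (A B : ℝ → ℝ) (hB : ContDiff ℝ (⊤ : ℕ∞) B) (w0 w1 w2 : ℝ)
    (hw : ∀ x y : ℝ, extremalLHSPlus q0 q1 q2 A B x y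
      = (x - y) * (w0 * x * y + w1 * (x + y) + w2)) :
    ∃ b0 b1 b2 b3 b4 : ℝ, ∀ z, B z = b0*z^4 + b1*z^3 + b2*z^2 + b3*z + b4 := by
  have key : ∀ x y : ℝ,
      ((q0*x+q1)*y + (q1*x+q2))^2 * deriv (deriv (deriv (deriv (deriv B)))) y = 0 := by
    intro x
    refine quintic_kill B hB (q0*x+q1) (q1*x+q2)
      ((q0*x+q1)^2 * deriv (deriv A) x - 6*q0*(q0*x+q1)*deriv A x + 12*q0^2*A x
        + (w0*x+w1))
      (2*(q0*x+q1)*(q1*x+q2)*deriv (deriv A) x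
        - 6*(q0*(q1*x+q2)+q1*(q0*x+q1))*deriv A x + 24*q0*q1*A x - (w0*x^2 - w2))
      ((q1*x+q2)^2*deriv (deriv A) x - 6*q1*(q1*x+q2)*deriv A x + 12*q1^2*A x
        - (w1*x^2 + w2*x)) ?_
    intro y
    have h := hw x y
    simp only [extremalLHSPlus] at h
    linear_combination h
  have hcont : Continuous (deriv (deriv (deriv (deriv (deriv B))))) :=
    (cd_step (cd_step (cd_step (cd_step (cd_step (hB.of_le (by simp))))))).continuous
  have hzero : ∀ y, deriv (deriv (deriv (deriv (deriv B)))) y = 0 := by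
    by_cases hq0 : q0 = 0
    · subst hq0
      by_cases hq1 : q1 = 0
      · subst hq1
        have hq2 : q2 ≠ 0 := by simpa using hq
        intro y
        have h := key 0 y
        have h2 : q2^2 * deriv (deriv (deriv (deriv (deriv B)))) y = 0 := by
          linear_combination h
        rcases mul_eq_zero.mp h2 with h3 | h3
        · exact absurd h3 (pow_ne_zero 2 hq2)
        · exact h3
      · intro y
        have h := key ((1 - q2 - q1*y)/q1) y
        have he : (0*((1 - q2 - q1*y)/q1)+q1)*y + (q1*((1 - q2 - q1*y)/q1)+q2) = 1 := by
          field_simp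
          ring
        rw [he] at h
        simpa using h
    · have hzero' : ∀ y, y ≠ -q1/q0 → deriv (deriv (deriv (deriv (deriv B)))) y = 0 := by
        intro y hy
        have hay : q0*y+q1 ≠ 0 := by
          intro hc
          apply hy
          field_simp
          linarith
        have h := key ((1 - (q1*y+q2))/(q0*y+q1)) y
        have he : (q0*((1 - (q1*y+q2))/(q0*y+q1))+q1)*y
            + (q1*((1 - (q1*y+q2))/(q0*y+q1))+q2) = 1 := by
          field_simp
          ring
        rw [he] at h
        simpa using h
      have heq : deriv (deriv (deriv (deriv (deriv B)))) = fun _ => (0:ℝ) :=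
        Continuous.ext_on (dense_compl_singleton (-q1/q0)) hcont continuous_const
          (fun y hy => hzero' y hy)
      intro y
      exact congrFun heq y
  have h0 : ContDiff ℝ (⊤ : ℕ∞) B := hB.of_le (by simp)
  have h1 := cd_step h0
  have h2 := cd_step h1
  have h3 := cd_step h2
  have h4 := cd_step h3
  have c4 : ∀ t, deriv (deriv (deriv (deriv B))) t = deriv (deriv (deriv (deriv B))) 0 :=
    fun t => is_const_of_deriv_eq_zero (cd_diff h4) hzero t 0
  have c3 : ∀ t, deriv (deriv (deriv B)) t
      = 0*t^4 + 0*t^3 + 0*t^2 + (deriv (deriv (deriv (deriv B))) 0)*t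
        + deriv (deriv (deriv B)) 0 :=
    int_step _ (cd_diff h3) 0 0 0 _ (fun t => by
      rw [c4 t]; ring)
  have c2 : ∀ t, deriv (deriv B) t
      = 0*t^4 + 0*t^3 + (deriv (deriv (deriv (deriv B))) 0/2)*t^2
        + (deriv (deriv (deriv B)) 0)*t + deriv (deriv B) 0 :=
    int_step _ (cd_diff h2) 0 0 _ _ (fun t => by linear_combination c3 t)
  have c1 : ∀ t, deriv B t
      = 0*t^4 + (deriv (deriv (deriv (deriv B))) 0/6)*t^3
        + (deriv (deriv (deriv B)) 0/2)*t^2 + (deriv (deriv B) 0)*t + deriv B 0 :=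
    int_step _ (cd_diff h1) 0 _ _ _ (fun t => by linear_combination c2 t)
  have c0 : ∀ t, B t
      = (deriv (deriv (deriv (deriv B))) 0/24)*t^4
        + (deriv (deriv (deriv B)) 0/6)*t^3 + (deriv (deriv B) 0/2)*t^2
        + (deriv B 0)*t + B 0 :=
    int_step _ (cd_diff h0) _ _ _ _ (fun t => by linear_combination c1 t)
  exact ⟨_, _, _, _, _, fun z => c0 z⟩

private lemma sig_case (q0 q1 q2 s0 s1 s2 s3 s4 : ℝ) (hq0 : q0 ≠ 0)
    (hE1 : 12*q1^2*s0 - 6*q0*q1*s1 + 2*q0^2*s2 = 0)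
    (hE2 : 24*q1*q2*s0 - 6*q0*q2*s1 - 4*q0*q1*s2 + 6*q0^2*s3 = 0)
    (hE3 : 12*q2^2*s0 - 6*q1*q2*s1 + 4*q1^2*s2 - 6*q0*q1*s3 + 12*q0^2*s4 = 0) :
    ∃ p0 p1 p2 : ℝ, 2*p1*q1 - (p2*q0 + p0*q2) = 0 ∧
      q0*p0 = s0/2 ∧ 2*q1*p0 + 2*q0*p1 = s1/2 ∧ q2*p0 + 4*q1*p1 + q0*p2 = s2/2 ∧
      2*q2*p1 + 2*q1*p2 = s3/2 ∧ q2*p2 = s4/2 := by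
  have h4 : (4*q0^3) ≠ 0 := mul_ne_zero (by norm_num) (pow_ne_zero 3 hq0)
  have hd : (4*q0^3)⁻¹*(4*q0^3) = 1 := inv_mul_cancel₀ h4
  refine ⟨(2*q0^2*s0)*(4*q0^3)⁻¹, (q0^2*s1-2*q0*q1*s0)*(4*q0^3)⁻¹,
    (2*q0^2*s2-2*q0*q2*s0-4*q0*q1*s1+8*q1^2*s0)*(4*q0^3)⁻¹, ?_, ?_, ?_, ?_, ?_, ?_⟩
  · linear_combination (-(q0*(4*q0^3)⁻¹))*hE1
  · linear_combination (s0/2)*hd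
  · linear_combination (s1/2)*hd
  · linear_combination (s2/2)*hd
  · linear_combination (s3/2)*hd + ((4/3)*q1*(4*q0^3)⁻¹)*hE1 - ((1/3)*q0*(4*q0^3)⁻¹)*hE2
  · linear_combination (s4/2)*hd + (q2*(4*q0^3)⁻¹)*hE1 - ((1/6)*q1*(4*q0^3)⁻¹)*hE2
      - ((1/6)*q0*(4*q0^3)⁻¹)*hE3

private lemma back_id (q0 q1 q2 p0 p1 p2 c0 c1 c2 c3 c4 : ℝ) (A B : ℝ → ℝ)
    (hπ : 2 * p1 * q1 - (p2 * q0 + p0 * q2) = 0)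
    (hAz : ∀ z : ℝ, A z = (q0 * z ^ 2 + 2 * q1 * z + q2) * (p0 * z ^ 2 + 2 * p1 * z + p2)
        + (c0 * z ^ 4 + c1 * z ^ 3 + c2 * z ^ 2 + c3 * z + c4))
    (hBz : ∀ z : ℝ, B z = (q0 * z ^ 2 + 2 * q1 * z + q2) * (p0 * z ^ 2 + 2 * p1 * z + p2)
        - (c0 * z ^ 4 + c1 * z ^ 3 + c2 * z ^ 2 + c3 * z + c4)) :
    ∀ x y : ℝ, extremalLHSPlus q0 q1 q2 A B x y
      = (x - y) * ((24*c0*q1*q2 - 6*c1*q0*q2 - 12*c1*q1^2 + 12*c2*q0*q1 - 6*c3*q0^2)*x*y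
        + (12*c0*q2^2 - 6*c1*q1*q2 + 6*c3*q0*q1 - 12*c4*q0^2)*(x+y)
        + (6*c1*q2^2 - 12*c2*q1*q2 + 6*c3*q0*q2 + 12*c3*q1^2 - 24*c4*q0*q1)) := by
  have hAfun : A = fun z => (q0*p0+c0)*z^4 + (2*q1*p0+2*q0*p1+c1)*z^3
      + (q2*p0+4*q1*p1+q0*p2+c2)*z^2 + (2*q2*p1+2*q1*p2+c3)*z + (q2*p2+c4) :=
    funext fun z => by rw [hAz z]; ring
  have hBfun : B = fun z => (q0*p0-c0)*z^4 + (2*q1*p0+2*q0*p1-c1)*z^3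
      + (q2*p0+4*q1*p1+q0*p2-c2)*z^2 + (2*q2*p1+2*q1*p2-c3)*z + (q2*p2-c4) :=
    funext fun z => by rw [hBz z]; ring
  have hA1 : deriv A = fun z => 4*(q0*p0+c0)*z^3 + 3*(2*q1*p0+2*q0*p1+c1)*z^2
      + 2*(q2*p0+4*q1*p1+q0*p2+c2)*z + (2*q2*p1+2*q1*p2+c3) := by
    rw [hAfun, deriv_quartic]
  have hB1 : deriv B = fun z => 4*(q0*p0-c0)*z^3 + 3*(2*q1*p0+2*q0*p1-c1)*z^2
      + 2*(q2*p0+4*q1*p1+q0*p2-c2)*z + (2*q2*p1+2*q1*p2-c3) := by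
    rw [hBfun, deriv_quartic]
  have hA2 : deriv (deriv A) = fun z => 3*(4*(q0*p0+c0))*z^2
      + 2*(3*(2*q1*p0+2*q0*p1+c1))*z + 2*(q2*p0+4*q1*p1+q0*p2+c2) := by
    rw [hA1, deriv_cubic]
  have hB2 : deriv (deriv B) = fun z => 3*(4*(q0*p0-c0))*z^2
      + 2*(3*(2*q1*p0+2*q0*p1-c1))*z + 2*(q2*p0+4*q1*p1+q0*p2-c2) := by
    rw [hB1, deriv_cubic]
  have hA1p : ∀ t : ℝ, deriv A t = 4*(q0*p0+c0)*t^3 + 3*(2*q1*p0+2*q0*p1+c1)*t^2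
      + 2*(q2*p0+4*q1*p1+q0*p2+c2)*t + (2*q2*p1+2*q1*p2+c3) := fun t => by rw [hA1]
  have hB1p : ∀ t : ℝ, deriv B t = 4*(q0*p0-c0)*t^3 + 3*(2*q1*p0+2*q0*p1-c1)*t^2
      + 2*(q2*p0+4*q1*p1+q0*p2-c2)*t + (2*q2*p1+2*q1*p2-c3) := fun t => by rw [hB1]
  have hA2p : ∀ t : ℝ, deriv (deriv A) t = 3*(4*(q0*p0+c0))*t^2
      + 2*(3*(2*q1*p0+2*q0*p1+c1))*t + 2*(q2*p0+4*q1*p1+q0*p2+c2) := fun t => by rw [hA2]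
  have hB2p : ∀ t : ℝ, deriv (deriv B) t = 3*(4*(q0*p0-c0))*t^2
      + 2*(3*(2*q1*p0+2*q0*p1-c1))*t + 2*(q2*p0+4*q1*p1+q0*p2-c2) := fun t => by rw [hB2]
  intro x y
  simp only [extremalLHSPlus]
  rw [hA2p x, hA1p x, hAz x, hB2p y, hB1p y, hBz y]
  linear_combination (-4*q2^2 - 8*q1*q2*(x+y) + (8*q1^2-12*q0*q2)*(x^2+y^2)
    + (16*q0*q2-32*q1^2)*(x*y) - 8*q0*q1*(x^2*y+x*y^2) - 4*q0^2*x^2*y^2) * hπ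

private lemma uniq_w (w0 w1 w2 w0' w1' w2' : ℝ)
    (h : ∀ x y : ℝ, (x-y)*(w0*x*y+w1*(x+y)+w2) = (x-y)*(w0'*x*y+w1'*(x+y)+w2')) :
    w0 = w0' ∧ w1 = w1' ∧ w2 = w2' := by
  have h10 := h 1 0
  have h20 := h 2 0
  have h1m := h 1 (-1)
  refine ⟨?_, ?_, ?_⟩
  · linear_combination -h1m/2 + 2*h10 - h20/2
  · linear_combination h20/2 - h10
  · linear_combination 2*h10 - h20/2

end AmbitoricAux

/-- Extremality equation for `g₊` of a regular ambitoric structure: (i) the scalar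
curvature equation holds with some quadratic `w` iff (ii) `A = qπ + P`, `B = qπ − P`
with `π` a quadratic orthogonal to `q` and `P` a quartic; moreover `w` is unique,
equals `E(P)` and is orthogonal to `q`. -/
theorem ambitoric_extremal_plus
    (q0 q1 q2 : ℝ) (hq : ¬(q0 = 0 ∧ q1 = 0 ∧ q2 = 0))
    (A B : ℝ → ℝ) (hA : ContDiff ℝ (⊤ : ℕ∞) A) (hB : ContDiff ℝ (⊤ : ℕ∞) B) :
    ((∃ w0 w1 w2 : ℝ, ∀ x y : ℝ,
        extremalLHSPlus q0 q1 q2 A B x y = (x - y) * (w0 * x * y + w1 * (x + y) + w2))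
      ↔ (∃ π0 π1 π2 c0 c1 c2 c3 c4 : ℝ,
          2 * π1 * q1 - (π2 * q0 + π0 * q2) = 0 ∧
          (∀ z : ℝ, A z = (q0 * z ^ 2 + 2 * q1 * z + q2) * (π0 * z ^ 2 + 2 * π1 * z + π2)
              + (c0 * z ^ 4 + c1 * z ^ 3 + c2 * z ^ 2 + c3 * z + c4)) ∧
          (∀ z : ℝ, B z = (q0 * z ^ 2 + 2 * q1 * z + q2) * (π0 * z ^ 2 + 2 * π1 * z + π2)
              - (c0 * z ^ 4 + c1 * z ^ 3 + c2 * z ^ 2 + c3 * z + c4))))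
    ∧ (∀ w0 w1 w2 w0' w1' w2' : ℝ,
        (∀ x y : ℝ, extremalLHSPlus q0 q1 q2 A B x y
            = (x - y) * (w0 * x * y + w1 * (x + y) + w2)) →
        (∀ x y : ℝ, extremalLHSPlus q0 q1 q2 A B x y
            = (x - y) * (w0' * x * y + w1' * (x + y) + w2')) →
        w0 = w0' ∧ w1 = w1' ∧ w2 = w2')
    ∧ (∀ w0 w1 w2 π0 π1 π2 c0 c1 c2 c3 c4 : ℝ,
        (∀ x y : ℝ, extremalLHSPlus q0 q1 q2 A B x y
            = (x - y) * (w0 * x * y + w1 * (x + y) + w2)) →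
        (2 * π1 * q1 - (π2 * q0 + π0 * q2) = 0 ∧
          (∀ z : ℝ, A z = (q0 * z ^ 2 + 2 * q1 * z + q2) * (π0 * z ^ 2 + 2 * π1 * z + π2)
              + (c0 * z ^ 4 + c1 * z ^ 3 + c2 * z ^ 2 + c3 * z + c4)) ∧
          (∀ z : ℝ, B z = (q0 * z ^ 2 + 2 * q1 * z + q2) * (π0 * z ^ 2 + 2 * π1 * z + π2)
              - (c0 * z ^ 4 + c1 * z ^ 3 + c2 * z ^ 2 + c3 * z + c4))) →
        (∀ z : ℝ, w0 * z ^ 2 + 2 * w1 * z + w2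
            = extremalQuadPlus q0 q1 q2 c0 c1 c2 c3 c4 z) ∧
        2 * w1 * q1 - (w2 * q0 + w0 * q2) = 0) := by
  refine ⟨⟨?_, ?_⟩, ?_, ?_⟩
  · -- (i) → (ii)
    rintro ⟨w0, w1, w2, hw⟩
    have hswap : ∀ x y : ℝ, extremalLHSPlus q0 q1 q2 B A x y
        = (x - y) * ((-w0) * x * y + (-w1) * (x + y) + (-w2)) := by
      intro x y
      have h := hw y x
      simp only [extremalLHSPlus] at h ⊢
      linear_combination h
    obtain ⟨b0, b1, b2, b3, b4, hB4⟩ := quartic_of_ext q0 q1 q2 hq A B hB w0 w1 w2 hw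
    obtain ⟨a0, a1, a2, a3, a4, hA4⟩ :=
      quartic_of_ext q0 q1 q2 hq B A hA (-w0) (-w1) (-w2) hswap
    have hAfun : A = fun z => a0*z^4 + a1*z^3 + a2*z^2 + a3*z + a4 := funext hA4
    have hBfun : B = fun z => b0*z^4 + b1*z^3 + b2*z^2 + b3*z + b4 := funext hB4
    have hA1 : deriv A = fun z => 4*a0*z^3 + 3*a1*z^2 + 2*a2*z + a3 := by
      rw [hAfun, deriv_quartic]
    have hB1 : deriv B = fun z => 4*b0*z^3 + 3*b1*z^2 + 2*b2*z + b3 := by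
      rw [hBfun, deriv_quartic]
    have hA2 : deriv (deriv A) = fun z => 3*(4*a0)*z^2 + 2*(3*a1)*z + 2*a2 := by
      rw [hA1, deriv_cubic]
    have hB2 : deriv (deriv B) = fun z => 3*(4*b0)*z^2 + 2*(3*b1)*z + 2*b2 := by
      rw [hB1, deriv_cubic]
    have hA1p : ∀ t : ℝ, deriv A t = 4*a0*t^3 + 3*a1*t^2 + 2*a2*t + a3 :=
      fun t => by rw [hA1]
    have hB1p : ∀ t : ℝ, deriv B t = 4*b0*t^3 + 3*b1*t^2 + 2*b2*t + b3 :=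
      fun t => by rw [hB1]
    have hA2p : ∀ t : ℝ, deriv (deriv A) t = 3*(4*a0)*t^2 + 2*(3*a1)*t + 2*a2 :=
      fun t => by rw [hA2]
    have hB2p : ∀ t : ℝ, deriv (deriv B) t = 3*(4*b0)*t^2 + 2*(3*b1)*t + 2*b2 :=
      fun t => by rw [hB2]
    have hpt : ∀ x y : ℝ,
        (q0*x*y + q1*(x+y) + q2)^2 * (3*(4*a0)*x^2 + 2*(3*a1)*x + 2*a2)
          - 6*(q0*y+q1)*(q0*x*y + q1*(x+y) + q2)*(4*a0*x^3 + 3*a1*x^2 + 2*a2*x + a3)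
          + 12*(q0*y+q1)^2*(a0*x^4 + a1*x^3 + a2*x^2 + a3*x + a4)
          + (q0*x*y + q1*(x+y) + q2)^2 * (3*(4*b0)*y^2 + 2*(3*b1)*y + 2*b2)
          - 6*(q0*x+q1)*(q0*x*y + q1*(x+y) + q2)*(4*b0*y^3 + 3*b1*y^2 + 2*b2*y + b3)
          + 12*(q0*x+q1)^2*(b0*y^4 + b1*y^3 + b2*y^2 + b3*y + b4)
        = (x - y) * (w0 * x * y + w1 * (x + y) + w2) := by
      intro x y
      have h := hw x y
      simp only [extremalLHSPlus] at h
      rw [hA2p x, hA1p x, hA4 x, hB2p y, hB1p y, hB4 y] at h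
      linear_combination h
    have hmm := hpt (-1) (-1)
    have hm0 := hpt (-1) 0
    have hm1 := hpt (-1) 1
    have h0m := hpt 0 (-1)
    have h00 := hpt 0 0
    have h01 := hpt 0 1
    have h1m := hpt 1 (-1)
    have h10 := hpt 1 0
    have h11 := hpt 1 1
    have hE1 : 12*q1^2*(a0+b0) - 6*q0*q1*(a1+b1) + 2*q0^2*(a2+b2) = 0 := by
      linear_combination (1/4 : ℝ) * hmm + (-1/2 : ℝ) * hm0 + (1/4 : ℝ) * hm1
        + (-1/2 : ℝ) * h0m + (1 : ℝ) * h00 + (-1/2 : ℝ) * h01 + (1/4 : ℝ) * h1m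
        + (-1/2 : ℝ) * h10 + (1/4 : ℝ) * h11
    have hE2 : 24*q1*q2*(a0+b0) - 6*q0*q2*(a1+b1) - 4*q0*q1*(a2+b2)
        + 6*q0^2*(a3+b3) = 0 := by
      linear_combination (-1/2 : ℝ) * hmm + (1/2 : ℝ) * hm0 + (1/2 : ℝ) * h0m
        + (-1/2 : ℝ) * h01 + (-1/2 : ℝ) * h10 + (1/2 : ℝ) * h11
    have hE3 : 12*q2^2*(a0+b0) - 6*q1*q2*(a1+b1) + 4*q1^2*(a2+b2) - 6*q0*q1*(a3+b3)
        + 12*q0^2*(a4+b4) = 0 := by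
      linear_combination (1/2 : ℝ) * hm0 + (1/2 : ℝ) * h0m + (-2 : ℝ) * h00
        + (1/2 : ℝ) * h01 + (1/2 : ℝ) * h10
    have hE4 : 12*q1*q2*(a1+b1) - 8*(q0*q2+q1^2)*(a2+b2) + 12*q0*q1*(a3+b3) = 0 := by
      linear_combination (1/4 : ℝ) * hmm + (-1/4 : ℝ) * hm1 + (-1/4 : ℝ) * h1m
        + (1/4 : ℝ) * h11
    have hE5 : 6*q2^2*(a1+b1) - 4*q1*q2*(a2+b2) - 6*q0*q2*(a3+b3)
        + 24*q0*q1*(a4+b4) = 0 := by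
      linear_combination (-1/2 : ℝ) * hm0 + (-1/2 : ℝ) * h0m + (1/2 : ℝ) * h01
        + (1/2 : ℝ) * h10
    have hE6 : 2*q2^2*(a2+b2) - 6*q1*q2*(a3+b3) + 12*q1^2*(a4+b4) = 0 := by
      linear_combination h00
    by_cases hq0 : q0 = 0
    · by_cases hq2 : q2 = 0
      · -- q0 = 0, q2 = 0, q1 ≠ 0
        have hq1 : q1 ≠ 0 := fun h => hq ⟨hq0, h, hq2⟩
        subst hq0; subst hq2
        have h4 : (4*q1) ≠ 0 := mul_ne_zero (by norm_num) hq1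
        have hd : (4*q1)⁻¹*(4*q1) = 1 := inv_mul_cancel₀ h4
        refine ⟨(a1+b1)*(4*q1)⁻¹, 0, (a3+b3)*(4*q1)⁻¹, (a0-b0)/2, (a1-b1)/2,
          (a2-b2)/2, (a3-b3)/2, (a4-b4)/2, by ring, ?_, ?_⟩
        · intro z
          rw [hA4 z]
          linear_combination ((2/3 : ℝ)*z^4*(4*q1)⁻¹^2)*hE1
            - (z^4*((a0+b0)/2)*(4*q1*(4*q1)⁻¹+1))*hd
            - (z^3*(a1+b1)/2)*hd
            - (z^2*(4*q1)⁻¹^2)*hE4 - (z^2*((a2+b2)/2)*(4*q1*(4*q1)⁻¹+1))*hd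
            - (z*(a3+b3)/2)*hd
            + ((2/3 : ℝ)*(4*q1)⁻¹^2)*hE6 - (((a4+b4)/2)*(4*q1*(4*q1)⁻¹+1))*hd
        · intro z
          rw [hB4 z]
          linear_combination ((2/3 : ℝ)*z^4*(4*q1)⁻¹^2)*hE1
            - (z^4*((a0+b0)/2)*(4*q1*(4*q1)⁻¹+1))*hd
            - (z^3*(a1+b1)/2)*hd
            - (z^2*(4*q1)⁻¹^2)*hE4 - (z^2*((a2+b2)/2)*(4*q1*(4*q1)⁻¹+1))*hd
            - (z*(a3+b3)/2)*hd
            + ((2/3 : ℝ)*(4*q1)⁻¹^2)*hE6 - (((a4+b4)/2)*(4*q1*(4*q1)⁻¹+1))*hd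
      · -- q2 ≠ 0 : reversed application
        obtain ⟨p0', p1', p2', hor, k4, k3, k2, k1, k0⟩ :=
          sig_case q2 q1 q0 (a4+b4) (a3+b3) (a2+b2) (a1+b1) (a0+b0) hq2
            (by linear_combination hE6) (by linear_combination hE5)
            (by linear_combination hE3)
        refine ⟨p2', p1', p0', (a0-b0)/2, (a1-b1)/2, (a2-b2)/2, (a3-b3)/2, (a4-b4)/2,
          by linear_combination hor, ?_, ?_⟩
        · intro z
          rw [hA4 z]
          linear_combination -(z^4*k0 + z^3*k1 + z^2*k2 + z*k3 + k4)
        · intro z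
          rw [hB4 z]
          linear_combination -(z^4*k0 + z^3*k1 + z^2*k2 + z*k3 + k4)
    · obtain ⟨p0, p1, p2, hor, k0, k1, k2, k3, k4⟩ :=
        sig_case q0 q1 q2 (a0+b0) (a1+b1) (a2+b2) (a3+b3) (a4+b4) hq0 hE1 hE2 hE3
      refine ⟨p0, p1, p2, (a0-b0)/2, (a1-b1)/2, (a2-b2)/2, (a3-b3)/2, (a4-b4)/2,
        hor, ?_, ?_⟩
      · intro z
        rw [hA4 z]
        linear_combination -(z^4*k0 + z^3*k1 + z^2*k2 + z*k3 + k4)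
      · intro z
        rw [hB4 z]
        linear_combination -(z^4*k0 + z^3*k1 + z^2*k2 + z*k3 + k4)
  · -- (ii) → (i)
    rintro ⟨p0, p1, p2, c0, c1, c2, c3, c4, hπ, hAz, hBz⟩
    exact ⟨24*c0*q1*q2 - 6*c1*q0*q2 - 12*c1*q1^2 + 12*c2*q0*q1 - 6*c3*q0^2,
      12*c0*q2^2 - 6*c1*q1*q2 + 6*c3*q0*q1 - 12*c4*q0^2,
      6*c1*q2^2 - 12*c2*q1*q2 + 6*c3*q0*q2 + 12*c3*q1^2 - 24*c4*q0*q1,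
      back_id q0 q1 q2 p0 p1 p2 c0 c1 c2 c3 c4 A B hπ hAz hBz⟩
  · -- uniqueness
    intro w0 w1 w2 w0' w1' w2' hw hw'
    exact uniq_w w0 w1 w2 w0' w1' w2' (fun x y => (hw x y).symm.trans (hw' x y))
  · -- w equals E(P) and is orthogonal
    rintro w0 w1 w2 p0 p1 p2 c0 c1 c2 c3 c4 hw ⟨hπ, hAz, hBz⟩
    have hW := back_id q0 q1 q2 p0 p1 p2 c0 c1 c2 c3 c4 A B hπ hAz hBz
    obtain ⟨e0, e1, e2⟩ := uniq_w w0 w1 w2 _ _ _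
      (fun x y => (hw x y).symm.trans (hW x y))
    subst e0; subst e1; subst e2
    constructor
    · intro z
      simp only [extremalQuadPlus]
      ring
    · ring
end

section
/- Let q(z) = q₀z² + 2q₁z + q₂ be a nonzero real quadratic and let Π be a real polynomial of degree at most 4. Then q(z)²Π''(z) − 3q(z)q'(z)Π'(z) + 3q'(z)²Π(z) = 0 for all real z if and only if there exists a real quadratic π with ⟨π,q⟩ = 0 such that Π(z) = q(z)π(z) for all z. -/
/-!
Writing `Π = q u`, one finds `q²Π'' − 3qq'Π' + 3q'²Π = q² (q u'' − q'u' + q''u)`, and for a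
quadratic `u = π` the bracket is the constant `−2⟨q, π⟩`. This gives one direction. Conversely the
left-hand side has degree at most 4, so the equation is five linear conditions on the coefficients
of `Π`; they force `Π` to be divisible by `q` with an orthogonal quotient, which is exhibited by
long division according to the degree of `q`.
-/

namespace Ambitoric

def quadInner (p0 p1 p2 q0 q1 q2 : ℝ) : ℝ := 2 * p1 * q1 - (p2 * q0 + p0 * q2)

def quadratic (a b c z : ℝ) : ℝ := a * z ^ 2 + 2 * b * z + c

/-- `q²Π'' − 3qq'Π' + 3q'²Π` at `z`, for `q = q₀z² + 2q₁z + q₂` and `Π = d₀z⁴ + ⋯ + d₄`. -/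
def odeLHS (q0 q1 q2 d0 d1 d2 d3 d4 z : ℝ) : ℝ :=
  quadratic q0 q1 q2 z ^ 2 * (12 * d0 * z ^ 2 + 6 * d1 * z + 2 * d2)
    - 3 * quadratic q0 q1 q2 z * (2 * q0 * z + 2 * q1) *
        (4 * d0 * z ^ 3 + 3 * d1 * z ^ 2 + 2 * d2 * z + d3)
    + 3 * (2 * q0 * z + 2 * q1) ^ 2 * (d0 * z ^ 4 + d1 * z ^ 3 + d2 * z ^ 2 + d3 * z + d4)

def IsOrthogonalMultiple (q0 q1 q2 d0 d1 d2 d3 d4 : ℝ) : Prop :=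
  ∃ π0 π1 π2 : ℝ, quadInner π0 π1 π2 q0 q1 q2 = 0 ∧
    ∀ z : ℝ, d0 * z ^ 4 + d1 * z ^ 3 + d2 * z ^ 2 + d3 * z + d4
      = quadratic q0 q1 q2 z * quadratic π0 π1 π2 z

theorem coeffs_eq_zero_of_forall_quartic_eq_zero {a b c d e : ℝ}
    (h : ∀ z : ℝ, a * z ^ 4 + b * z ^ 3 + c * z ^ 2 + d * z + e = 0) :
    a = 0 ∧ b = 0 ∧ c = 0 ∧ d = 0 ∧ e = 0 := by
  have h0 := h 0
  have h1 := h 1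
  have h2 := h (-1)
  have h3 := h 2
  have h4 := h (-2)
  refine ⟨?_, ?_, ?_, ?_, ?_⟩
  · linear_combination (-1/6) * h1 - (1/6) * h2 + (1/24) * h3 + (1/24) * h4 + (1/4) * h0
  · linear_combination (-1/6) * h1 + (1/6) * h2 + (1/12) * h3 - (1/12) * h4
  · linear_combination (2/3) * h1 + (2/3) * h2 - (1/24) * h3 - (1/24) * h4 - (5/4) * h0
  · linear_combination (2/3) * h1 - (2/3) * h2 - (1/12) * h3 + (1/12) * h4
  · linear_combination h0

section

variable {q0 q1 q2 d0 d1 d2 d3 d4 : ℝ}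

theorem odeLHS_eq_of_eq_mul {π0 π1 π2 : ℝ}
    (h : ∀ z : ℝ, d0 * z ^ 4 + d1 * z ^ 3 + d2 * z ^ 2 + d3 * z + d4
      = quadratic q0 q1 q2 z * quadratic π0 π1 π2 z) (z : ℝ) :
    odeLHS q0 q1 q2 d0 d1 d2 d3 d4 z
      = -2 * quadInner π0 π1 π2 q0 q1 q2 * quadratic q0 q1 q2 z ^ 2 := by
  obtain ⟨h0, h1, h2, h3, h4⟩ := coeffs_eq_zero_of_forall_quartic_eq_zero
    (a := d0 - q0 * π0) (b := d1 - (2 * q0 * π1 + 2 * q1 * π0))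
    (c := d2 - (q0 * π2 + 4 * q1 * π1 + q2 * π0)) (d := d3 - (2 * q1 * π2 + 2 * q2 * π1))
    (e := d4 - q2 * π2) fun x => by
      have hx := h x
      unfold quadratic at hx
      linear_combination hx
  obtain rfl := sub_eq_zero.1 h0
  obtain rfl := sub_eq_zero.1 h1
  obtain rfl := sub_eq_zero.1 h2
  obtain rfl := sub_eq_zero.1 h3
  obtain rfl := sub_eq_zero.1 h4
  unfold odeLHS quadInner quadratic
  ring

theorem odeLHS_eq_zero_of_isOrthogonalMultiple (h : IsOrthogonalMultiple q0 q1 q2 d0 d1 d2 d3 d4)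
    (z : ℝ) : odeLHS q0 q1 q2 d0 d1 d2 d3 d4 z = 0 := by
  obtain ⟨π0, π1, π2, horth, hmul⟩ := h
  rw [odeLHS_eq_of_eq_mul hmul, horth]
  ring

/-- The coefficients of `z⁴, …, z⁰` in `odeLHS`, whose `z⁶` and `z⁵` terms cancel. -/
theorem odeCoeffs_eq_zero (h : ∀ z : ℝ, odeLHS q0 q1 q2 d0 d1 d2 d3 d4 z = 0) :
    12 * q1 ^ 2 * d0 - 6 * q0 * q1 * d1 + 2 * q0 ^ 2 * d2 = 0 ∧
    24 * q1 * q2 * d0 - 6 * q0 * q2 * d1 - 4 * q0 * q1 * d2 + 6 * q0 ^ 2 * d3 = 0 ∧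
    12 * q2 ^ 2 * d0 + 6 * q1 * q2 * d1 - 4 * q1 ^ 2 * d2 - 8 * q0 * q2 * d2 + 6 * q0 * q1 * d3
      + 12 * q0 ^ 2 * d4 = 0 ∧
    6 * q2 ^ 2 * d1 - 4 * q1 * q2 * d2 - 6 * q0 * q2 * d3 + 24 * q0 * q1 * d4 = 0 ∧
    2 * q2 ^ 2 * d2 - 6 * q1 * q2 * d3 + 12 * q1 ^ 2 * d4 = 0 :=
  coeffs_eq_zero_of_forall_quartic_eq_zero fun z => by
    have hz := h z
    unfold odeLHS quadratic at hz
    linear_combination hz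

theorem isOrthogonalMultiple_of_leading_ne_zero (hq0 : q0 ≠ 0)
    (h : ∀ z : ℝ, odeLHS q0 q1 q2 d0 d1 d2 d3 d4 z = 0) :
    IsOrthogonalMultiple q0 q1 q2 d0 d1 d2 d3 d4 := by
  obtain ⟨e4, e3, e2, -, -⟩ := odeCoeffs_eq_zero h
  refine ⟨d0 / q0, (q0 * d1 - 2 * q1 * d0) / (2 * q0 ^ 2),
    (q0 ^ 2 * d2 - 2 * q0 * q1 * d1 + (4 * q1 ^ 2 - q0 * q2) * d0) / q0 ^ 3, ?_, fun z => ?_⟩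
  · unfold quadInner
    field_simp
    linear_combination (-1/2) * e4
  · unfold quadratic
    field_simp
    linear_combination (q0 / 12) * e2 + (q0 / 6 * z - q1 / 12) * e3 +
      (-(2 * q1 / 3) * z - q2 / 6) * e4

theorem isOrthogonalMultiple_of_linear (hq1 : q1 ≠ 0)
    (h : ∀ z : ℝ, odeLHS 0 q1 q2 d0 d1 d2 d3 d4 z = 0) :
    IsOrthogonalMultiple 0 q1 q2 d0 d1 d2 d3 d4 := by
  obtain ⟨e4, e3, e2, e1, e0⟩ := odeCoeffs_eq_zero h
  refine ⟨d1 / (2 * q1), (2 * q1 * d2 - q2 * d1) / (8 * q1 ^ 2),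
    (4 * q1 ^ 2 * d3 - 2 * q1 * q2 * d2 + q2 ^ 2 * d1) / (8 * q1 ^ 3), ?_, fun z => ?_⟩
  · unfold quadInner
    field_simp
    linear_combination (-2 * q1) * e2 + q2 * e3
  · unfold quadratic
    field_simp
    linear_combination (4 * q1 / 3) * z ^ 4 * e4 + (4 * q1 / 3) * e0 - (q2 / 3) * e1

theorem isOrthogonalMultiple_of_constant (hq2 : q2 ≠ 0)
    (h : ∀ z : ℝ, odeLHS 0 0 q2 d0 d1 d2 d3 d4 z = 0) :
    IsOrthogonalMultiple 0 0 q2 d0 d1 d2 d3 d4 := by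
  obtain ⟨-, -, e2, e1, e0⟩ := odeCoeffs_eq_zero h
  have hq2sq : q2 ^ 2 ≠ 0 := pow_ne_zero 2 hq2
  have hd2 : d2 = 0 := by simpa [hq2sq] using e0
  have hd1 : d1 = 0 := by simpa [hq2sq, hd2] using e1
  have hd0 : d0 = 0 := by simpa [hq2sq, hd1, hd2] using e2
  refine ⟨0, d3 / (2 * q2), d4 / q2, by unfold quadInner; ring, fun z => ?_⟩
  unfold quadratic
  subst hd0 hd1 hd2
  field_simp
  ring

end

end Ambitoric

/-- For a nonzero real quadratic `q(z) = q₀z² + 2q₁z + q₂` and a real polynomial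
`Π(z) = d₀z⁴ + d₁z³ + d₂z² + d₃z + d₄` of degree at most 4, the ODE
`q²Π'' − 3qq'Π' + 3(q')²Π = 0` holds identically iff `Π = qπ` for some real
quadratic `π` orthogonal to `q`. -/
theorem ambitoric_symmetric_ODE
    (q0 q1 q2 : ℝ) (hq : ¬(q0 = 0 ∧ q1 = 0 ∧ q2 = 0))
    (d0 d1 d2 d3 d4 : ℝ) :
    (∀ z : ℝ,
      (q0 * z ^ 2 + 2 * q1 * z + q2) ^ 2 * (12 * d0 * z ^ 2 + 6 * d1 * z + 2 * d2)
        - 3 * (q0 * z ^ 2 + 2 * q1 * z + q2) * (2 * q0 * z + 2 * q1) *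
            (4 * d0 * z ^ 3 + 3 * d1 * z ^ 2 + 2 * d2 * z + d3)
        + 3 * (2 * q0 * z + 2 * q1) ^ 2 *
            (d0 * z ^ 4 + d1 * z ^ 3 + d2 * z ^ 2 + d3 * z + d4) = 0)
    ↔ ∃ π0 π1 π2 : ℝ, 2 * π1 * q1 - (π2 * q0 + π0 * q2) = 0 ∧
        ∀ z : ℝ, d0 * z ^ 4 + d1 * z ^ 3 + d2 * z ^ 2 + d3 * z + d4
          = (q0 * z ^ 2 + 2 * q1 * z + q2) * (π0 * z ^ 2 + 2 * π1 * z + π2) := by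
  change (∀ z, Ambitoric.odeLHS q0 q1 q2 d0 d1 d2 d3 d4 z = 0) ↔
    Ambitoric.IsOrthogonalMultiple q0 q1 q2 d0 d1 d2 d3 d4
  refine ⟨fun h => ?_, Ambitoric.odeLHS_eq_zero_of_isOrthogonalMultiple⟩
  rcases ne_or_eq q0 0 with hq0 | rfl
  · exact Ambitoric.isOrthogonalMultiple_of_leading_ne_zero hq0 h
  rcases ne_or_eq q1 0 with hq1 | rfl
  · exact Ambitoric.isOrthogonalMultiple_of_linear hq1 h
  · exact Ambitoric.isOrthogonalMultiple_of_constant (fun hq2 => hq ⟨rfl, rfl, hq2⟩) h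
end

section
/- Let p and q be nonzero real quadratics with ⟨p,q⟩ = 0, with polarizations p(x,y) = p₀xy + p₁(x+y) + p₂ and q(x,y) = q₀xy + q₁(x+y) + q₂, and define h(x,y) = (x−y)q(x,y)/p(x,y)² on the (nonempty, open) set Ω = {(x,y) ∈ ℝ² : p(x,y) ≠ 0}. Then the mixed second partial derivative ∂²h/∂x∂y vanishes identically on Ω if and only if p₁² = p₀p₂ (i.e. Q(p) = 0). -/
/-!
Differentiating `h = (x - y) q(x,y) / p(x,y)²` once in each variable gives
`∂²h/∂x∂y = 2 (x - y) (3 Q(p) q(x,y) - ⟨p,q⟩ p(x,y)) / p(x,y)⁴`.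
When `⟨p,q⟩ = 0` this vanishes on `Ω` as soon as `Q(p) = 0`. Conversely, if `Q(p) ≠ 0`,
then `(x - y) q(x,y) p(x,y)` vanishes on all of `ℝ²`, so the corresponding product of
polynomials is zero; as `ℝ[x,y]` is a domain and `x - y`, `p` are nonzero, `q = 0`.
-/

open Filter Topology MvPolynomial

theorem MvPolynomial.forall_eval_eq_zero_or_of_forall_eval_mul_eq_zero {R σ : Type*}
    [CommRing R] [IsDomain R] [Infinite R] {f g : MvPolynomial σ R}
    (h : ∀ v, eval v f * eval v g = 0) : (∀ v, eval v f = 0) ∨ (∀ v, eval v g = 0) := by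
  have hfg : f * g = 0 := MvPolynomial.funext (by simpa using h)
  rcases mul_eq_zero.mp hfg with rfl | rfl <;> simp

def polarization (a b c x y : ℝ) : ℝ := a * x * y + b * (x + y) + c

noncomputable def polarizationPoly (a b c : ℝ) : MvPolynomial (Fin 2) ℝ :=
  C a * X 0 * X 1 + C b * (X 0 + X 1) + C c

section Polarization

variable (a b c : ℝ)

theorem polarization_comm (x y : ℝ) : polarization a b c x y = polarization a b c y x := by
  unfold polarization; ring

theorem eval_polarizationPoly (v : Fin 2 → ℝ) :
    eval v (polarizationPoly a b c) = polarization a b c (v 0) (v 1) := by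
  simp [polarizationPoly, polarization]

theorem hasDerivAt_polarization_left (x y : ℝ) :
    HasDerivAt (fun x' => polarization a b c x' y) (a * y + b) x := by
  have hlin : (fun x' => polarization a b c x' y) = fun x' => (a * y + b) * x' + (b * y + c) := by
    ext x'; unfold polarization; ring
  rw [hlin]
  simpa using ((hasDerivAt_id x).const_mul (a * y + b)).add_const (b * y + c)

theorem hasDerivAt_polarization_right (x y : ℝ) :
    HasDerivAt (fun y' => polarization a b c x y') (a * x + b) y := by
  simpa only [polarization_comm a b c x] using hasDerivAt_polarization_left a b c y x

variable {a b c}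

theorem eq_zero_of_forall_polarization_eq_zero (h : ∀ x y, polarization a b c x y = 0) :
    a = 0 ∧ b = 0 ∧ c = 0 := by
  have h00 := h 0 0
  have h10 := h 1 0
  have h11 := h 1 1
  simp only [polarization] at h00 h10 h11
  exact ⟨by linarith, by linarith, by linarith⟩

theorem eq_zero_of_forall_sub_mul_polarization_mul_eq_zero {p0 p1 p2 : ℝ}
    (hp : ¬(p0 = 0 ∧ p1 = 0 ∧ p2 = 0))
    (h : ∀ x y, (x - y) * polarization a b c x y * polarization p0 p1 p2 x y = 0) :
    a = 0 ∧ b = 0 ∧ c = 0 := by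
  have hprod : ∀ v : Fin 2 → ℝ, eval v ((X 0 - X 1) * polarizationPoly a b c)
      * eval v (polarizationPoly p0 p1 p2) = 0 := fun v => by
    simpa [eval_polarizationPoly] using h (v 0) (v 1)
  rcases forall_eval_eq_zero_or_of_forall_eval_mul_eq_zero hprod with hsub_mul | hp_zero
  · have hsub_mul' : ∀ v : Fin 2 → ℝ,
        eval v (X 0 - X 1) * eval v (polarizationPoly a b c) = 0 := by
      simpa using hsub_mul
    rcases forall_eval_eq_zero_or_of_forall_eval_mul_eq_zero hsub_mul' with hsub | hq_zero
    · simpa using hsub ![1, 0]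
    · exact eq_zero_of_forall_polarization_eq_zero fun x y => by
        simpa [eval_polarizationPoly] using hq_zero ![x, y]
  · exact absurd (eq_zero_of_forall_polarization_eq_zero fun x y => by
      simpa [eval_polarizationPoly] using hp_zero ![x, y]) hp

end Polarization

section MixedPartial

variable (p0 p1 p2 q0 q1 q2 : ℝ) {x y : ℝ}

theorem hasDerivAt_potential_left (hP : polarization p0 p1 p2 x y ≠ 0) :
    HasDerivAt (fun x' => (x' - y) * polarization q0 q1 q2 x' y / polarization p0 p1 p2 x' y ^ 2)
      (((polarization q0 q1 q2 x y + (x - y) * (q0 * y + q1)) * polarization p0 p1 p2 x y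
          - 2 * (x - y) * polarization q0 q1 q2 x y * (p0 * y + p1))
        / polarization p0 p1 p2 x y ^ 3) x := by
  have hnum := ((hasDerivAt_id x).sub_const y).mul (hasDerivAt_polarization_left q0 q1 q2 x y)
  have hden := (hasDerivAt_polarization_left p0 p1 p2 x y).pow 2
  refine (hnum.div hden (pow_ne_zero 2 hP)).congr_deriv ?_
  simp only [Pi.mul_apply, Pi.pow_apply, id]
  field_simp
  ring

theorem hasDerivAt_potential_mixed (hP : polarization p0 p1 p2 x y ≠ 0) :
    HasDerivAt (fun y' =>
        ((polarization q0 q1 q2 x y' + (x - y') * (q0 * y' + q1)) * polarization p0 p1 p2 x y'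
          - 2 * (x - y') * polarization q0 q1 q2 x y' * (p0 * y' + p1))
        / polarization p0 p1 p2 x y' ^ 3)
      (2 * (x - y) * (3 * (p1 ^ 2 - p0 * p2) * polarization q0 q1 q2 x y
          - (2 * p1 * q1 - (p2 * q0 + p0 * q2)) * polarization p0 p1 p2 x y)
        / polarization p0 p1 p2 x y ^ 4) y := by
  have hQ := hasDerivAt_polarization_right q0 q1 q2 x y
  have hP' := hasDerivAt_polarization_right p0 p1 p2 x y
  have hd := (hasDerivAt_id y).const_sub x
  have hlq := ((hasDerivAt_id y).const_mul q0).add_const q1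
  have hlp := ((hasDerivAt_id y).const_mul p0).add_const p1
  have hnum := ((hQ.add (hd.mul hlq)).mul hP').sub (((hd.const_mul 2).mul hQ).mul hlp)
  refine (hnum.div (hP'.pow 3) (pow_ne_zero 3 hP)).congr_deriv ?_
  simp only [Pi.mul_apply, Pi.pow_apply, Pi.add_apply, Pi.sub_apply, id]
  field_simp
  unfold polarization
  ring

theorem deriv_deriv_potential (hP : polarization p0 p1 p2 x y ≠ 0) :
    deriv (fun y' => deriv (fun x' =>
        (x' - y') * polarization q0 q1 q2 x' y' / polarization p0 p1 p2 x' y' ^ 2) x) y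
      = 2 * (x - y) * (3 * (p1 ^ 2 - p0 * p2) * polarization q0 q1 q2 x y
          - (2 * p1 * q1 - (p2 * q0 + p0 * q2)) * polarization p0 p1 p2 x y)
        / polarization p0 p1 p2 x y ^ 4 := by
  have hnear : ∀ᶠ y' in 𝓝 y, polarization p0 p1 p2 x y' ≠ 0 :=
    (hasDerivAt_polarization_right p0 p1 p2 x y).continuousAt.eventually_ne hP
  refine ((hasDerivAt_potential_mixed p0 p1 p2 q0 q1 q2 hP).congr_of_eventuallyEq ?_).deriv
  filter_upwards [hnear] with y' hy' using (hasDerivAt_potential_left p0 p1 p2 q0 q1 q2 hy').deriv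

end MixedPartial

/-- For nonzero orthogonal real quadratics `p`, `q`, the function
`h(x,y) = (x−y)q(x,y)/p(x,y)²` on `Ω = {p(x,y) ≠ 0}` has identically vanishing mixed
second partial derivative `∂²h/∂x∂y` iff `p` is null, i.e. `p₁² = p₀p₂`. -/
theorem killing_tensor_mixed_partial
    (p0 p1 p2 q0 q1 q2 : ℝ)
    (hp : ¬(p0 = 0 ∧ p1 = 0 ∧ p2 = 0)) (hq : ¬(q0 = 0 ∧ q1 = 0 ∧ q2 = 0))
    (horth : 2 * p1 * q1 - (p2 * q0 + p0 * q2) = 0) :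
    (∀ x y : ℝ, p0 * x * y + p1 * (x + y) + p2 ≠ 0 →
      deriv (fun y' : ℝ => deriv (fun x' : ℝ =>
        (x' - y') * (q0 * x' * y' + q1 * (x' + y') + q2)
          / (p0 * x' * y' + p1 * (x' + y') + p2) ^ 2) x) y = 0)
    ↔ p1 ^ 2 = p0 * p2 := by
  constructor
  · intro H
    by_contra hdisc
    refine hq (eq_zero_of_forall_sub_mul_polarization_mul_eq_zero hp fun x y => ?_)
    by_cases hP : polarization p0 p1 p2 x y = 0
    · rw [hP, mul_zero]
    have hxy := (deriv_deriv_potential p0 p1 p2 q0 q1 q2 hP).symm.trans (H x y hP)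
    rw [horth, zero_mul, sub_zero, div_eq_zero_iff, or_iff_left (pow_ne_zero 4 hP)] at hxy
    have hscaled : 6 * (p1 ^ 2 - p0 * p2) * ((x - y) * polarization q0 q1 q2 x y) = 0 := by
      linear_combination hxy
    rw [(mul_eq_zero.mp hscaled).resolve_left (mul_ne_zero (by norm_num) (sub_ne_zero.mpr hdisc)),
      zero_mul]
  · intro hdisc x y hP
    exact (deriv_deriv_potential p0 p1 p2 q0 q1 q2 hP).trans (by rw [horth, hdisc]; ring)
end
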